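/- The map Σ(s, u) = (cos s, sin s cos s, (1/24)(-9 sin s - sin 3s) + u) is injective on [0, 2π) × [0, 1/3]. -/

import Mathlib

abbrev H : Type := ℝ × ℝ × ℝ

/-- The lifted surface obtained by translating the lift of the lemniscate of Gerono
vertically by heights u ∈ [0, 1/3]. -/
noncomputable def SigmaMap (p : ℝ × ℝ) : H :=
  (Real.cos p.1, Real.sin p.1 * Real.cos p.1,
    (1 / 24) * (-9 * Real.sin p.1 - Real.sin (3 * p.1)) + p.2)

/-!
The first two coordinates of `Σ` trace the lemniscate of Gerono `(cos s, sin s cos s)`, whose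
only double point is the origin, reached at `s = π/2` and `s = 3π/2`. There the height of the
lift is `∓1/3`, so the two lifted branches are `2/3` apart, more than the vertical extent `1/3`
of the strip: the translates cannot meet.
-/

open Real Set

noncomputable def geronoLiftHeight (s : ℝ) : ℝ := 1 / 24 * (-9 * sin s - sin (3 * s))

lemma sigmaMap_apply (p : ℝ × ℝ) :
    SigmaMap p = (cos p.1, sin p.1 * cos p.1, geronoLiftHeight p.1 + p.2) := rfl

lemma geronoLiftHeight_eq (s : ℝ) : geronoLiftHeight s = (sin s ^ 3 - 3 * sin s) / 6 := by
  rw [geronoLiftHeight, sin_three_mul]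
  ring

lemma geronoLiftHeight_two_pi_sub (s : ℝ) :
    geronoLiftHeight (2 * π - s) = -geronoLiftHeight s := by
  rw [geronoLiftHeight_eq, geronoLiftHeight_eq, sin_two_pi_sub]
  ring

lemma abs_geronoLiftHeight_of_cos_eq_zero {s : ℝ} (h : cos s = 0) :
    |geronoLiftHeight s| = 1 / 3 := by
  have hsin : sin s ^ 2 = 1 := by nlinarith [sin_sq_add_cos_sq s]
  have hheight : geronoLiftHeight s = -sin s / 3 := by
    rw [geronoLiftHeight_eq]
    linear_combination sin s / 6 * hsin
  have habs : |sin s| = 1 := by rw [← sq_eq_sq₀ (abs_nonneg _) zero_le_one, sq_abs, hsin, one_pow]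
  rw [hheight, neg_div, abs_neg, abs_div, habs, abs_of_pos three_pos]

lemma eq_or_eq_two_pi_sub_of_cos_eq_cos {s t : ℝ} (hs : s ∈ Ico 0 (2 * π))
    (ht : t ∈ Ico 0 (2 * π)) (h : cos s = cos t) : t = s ∨ t = 2 * π - s := by
  obtain ⟨hs0, hs1⟩ := hs
  obtain ⟨ht0, ht1⟩ := ht
  obtain ⟨k, hk | hk⟩ := cos_eq_cos_iff.1 h
  · have hk1 : (-1 : ℝ) < k := by nlinarith [pi_pos]
    have hk2 : (k : ℝ) < 1 := by nlinarith [pi_pos]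
    have hk0 : k = 0 := by norm_cast at hk1 hk2; omega
    left
    simpa [hk0] using hk
  · have hk1 : (0 : ℝ) ≤ k := by nlinarith [pi_pos]
    have hk2 : (k : ℝ) < 2 := by nlinarith [pi_pos]
    norm_cast at hk1 hk2
    interval_cases k
    · left
      push_cast at hk
      linarith
    · right
      push_cast at hk
      linarith

lemma eq_zero_or_eq_pi_of_sin_eq_zero {s : ℝ} (hs : s ∈ Ico 0 (2 * π)) (h : sin s = 0) :
    s = 0 ∨ s = π := by
  obtain ⟨n, rfl⟩ := sin_eq_zero_iff.1 h
  have hn1 : (0 : ℝ) ≤ n := by nlinarith [pi_pos, hs.1]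
  have hn2 : (n : ℝ) < 2 := by nlinarith [pi_pos, hs.2]
  norm_cast at hn1 hn2
  interval_cases n <;> simp

lemma eq_two_pi_sub_and_cos_eq_zero_of_gerono_eq {s t : ℝ} (hs : s ∈ Ico 0 (2 * π))
    (ht : t ∈ Ico 0 (2 * π)) (hcos : cos s = cos t) (hsc : sin s * cos s = sin t * cos t)
    (hne : s ≠ t) : t = 2 * π - s ∧ cos s = 0 := by
  rcases eq_or_eq_two_pi_sub_of_cos_eq_cos hs ht hcos with rfl | rfl
  · exact absurd rfl hne
  refine ⟨rfl, ?_⟩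
  rw [sin_two_pi_sub, cos_two_pi_sub] at hsc
  rcases mul_eq_zero.1 (by linarith : sin s * cos s = 0) with hsin | hcos0
  · rcases eq_zero_or_eq_pi_of_sin_eq_zero hs hsin with rfl | rfl
    · exact absurd ht.2 (by simp)
    · exact absurd (by ring) hne
  · exact hcos0

/-- Σ is injective on [0, 2π) × [0, 1/3]. -/
theorem sigma_injective :
    Set.InjOn SigmaMap (Set.Ico 0 (2 * Real.pi) ×ˢ Set.Icc 0 (1 / 3 : ℝ)) := by
  rintro ⟨s, u⟩ ⟨hs, hu0, hu1⟩ ⟨t, v⟩ ⟨ht, hv0, hv1⟩ h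
  simp only [sigmaMap_apply, Prod.mk.injEq] at h
  obtain ⟨hcos, hsc, hheight⟩ := h
  by_cases hst : s = t
  · subst hst
    simp only [Prod.mk.injEq, true_and]
    linarith
  obtain ⟨rfl, hcos0⟩ := eq_two_pi_sub_and_cos_eq_zero_of_gerono_eq hs ht hcos hsc hst
  rw [geronoLiftHeight_two_pi_sub] at hheight
  have habs := abs_geronoLiftHeight_of_cos_eq_zero hcos0
  rcases abs_eq (by norm_num : (0 : ℝ) ≤ 1 / 3) |>.1 habs with h | h <;> linarith
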